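/- arXiv:1702.03869 — 2 statements merged into one kernel-verified Lean document; each statement's English description precedes it below -/
import Mathlib

section
/- For integers m ≥ 1 and real z ∈ [0,1]: ∫₀^z ln^m(1+x)/x dx = (1/(m+1)) ln^{m+1}(1+z) + m!·(ζ(m+1) − Li_{m+1}(1/(1+z))) − m!·∑_{j=1}^m (ln^{m−j+1}(1+z)/(m−j+1)!)·Li_j(1/(1+z)), where Li₁(t) = −ln(1−t). -/
/-!
With `L = log (1 + z)` and `t = 1 / (1 + z)` one has `d/dz Li_{j+1}(t) = -Li_j(t) / (1 + z)` and
`dL/dz = 1 / (1 + z)`, so in `∑_{k ≤ m} L^(m-k) / (m-k)! · Li_{k+1}(t)` the derivatives telescope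
down to `-L^m / m! · Li_0(t) / (1 + z) = -L^m / (m! · z (1 + z))`, using `Li_0(t) = t / (1 - t)`.
Hence the right-hand side is an antiderivative of `L^m / z` on `(0, ∞)`. It tends to `0` as
`z → 0⁺` because `Li_p` is continuous on `[-1, 1]` for `p ≥ 2` with `Li_p(1) = ζ(p)`, and the only
divergent term, `L^m · Li_1(t) = L^m (L - log z)`, is killed by `L log z → 0`. The integrand is
nonnegative, hence integrable, and the fundamental theorem of calculus applies.
-/

open Real Filter

/-- Generalized harmonic number `H_n^(m) = ∑_{j=1}^n 1/j^m`. -/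
noncomputable def H (m n : ℕ) : ℝ := ∑ j ∈ Finset.range n, 1 / ((j : ℝ) + 1) ^ m

/-- Riemann zeta value `ζ(r) = ∑_{n=1}^∞ 1/n^r`. -/
noncomputable def zt (r : ℕ) : ℝ := ∑' n : ℕ, 1 / ((n : ℝ) + 1) ^ r

/-- Polylogarithm `Li_p(x)`, with `Li_1(x) = -log(1-x)`. -/
noncomputable def Li (p : ℕ) (x : ℝ) : ℝ :=
  if p = 1 then -Real.log (1 - x) else ∑' n : ℕ, x ^ (n + 1) / ((n : ℝ) + 1) ^ p

open Topology Finset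
open scoped Nat

theorem hasDerivAt_sum_pow_div_factorial_mul {𝕜 : Type*} [NontriviallyNormedField 𝕜] [CharZero 𝕜]
    {u : 𝕜 → 𝕜} {u' x : 𝕜} (hu : HasDerivAt u u' x) {f : ℕ → 𝕜 → 𝕜}
    (hf : ∀ j, HasDerivAt (f (j + 1)) (-(u' * f j x)) x) (n : ℕ) :
    HasDerivAt (fun y => ∑ k ∈ range (n + 1), u y ^ (n - k) / (n - k)! * f (k + 1) y)
      (-(u' * (u x ^ n / n ! * f 0 x))) x := by
  induction n generalizing f with
  | zero => simpa using hf 0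
  | succ n ih =>
    have hsplit : (fun y => ∑ k ∈ range (n + 2), u y ^ (n + 1 - k) / (n + 1 - k)! * f (k + 1) y)
        = fun y => ∑ k ∈ range (n + 1), u y ^ (n - k) / (n - k)! * f (k + 2) y
          + u y ^ (n + 1) / (n + 1)! * f 1 y := by
      funext y
      rw [sum_range_succ']
      simp
    rw [hsplit]
    refine ((ih (f := fun j => f (j + 1)) fun j => hf (j + 1)).add
      (((hu.pow (n + 1)).div_const ((n + 1)! : 𝕜)).mul (hf 0))).congr_deriv ?_
    simp only [Pi.pow_apply, Nat.add_sub_cancel]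
    push_cast [Nat.factorial_succ]
    field_simp
    ring

theorem Li_eq_tsum {p : ℕ} (hp : p ≠ 1) (x : ℝ) :
    Li p x = ∑' n : ℕ, x ^ (n + 1) / ((n : ℝ) + 1) ^ p :=
  if_neg hp

theorem Li_one_right {p : ℕ} (hp : p ≠ 1) : Li p 1 = zt p := by
  simp only [Li_eq_tsum hp, one_pow, zt]

theorem norm_pow_succ_div_le (p n : ℕ) (x : ℝ) :
    ‖x ^ (n + 1) / ((n : ℝ) + 1) ^ p‖ ≤ ‖x‖ ^ (n + 1) := by
  rw [norm_div, norm_pow, norm_pow]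
  refine div_le_self (by positivity) (one_le_pow₀ ?_)
  rw [Real.norm_of_nonneg (by positivity)]
  simp

theorem hasSum_Li (p : ℕ) {x : ℝ} (hx : |x| < 1) :
    HasSum (fun n : ℕ => x ^ (n + 1) / ((n : ℝ) + 1) ^ p) (Li p x) := by
  rcases eq_or_ne p 1 with rfl | hp
  · simpa [Li] using hasSum_pow_div_log_of_abs_lt_one hx
  · rw [Li_eq_tsum hp]
    refine (Summable.of_norm_bounded ?_ fun n => norm_pow_succ_div_le p n x).hasSum
    exact (summable_nat_add_iff 1).mpr (summable_geometric_of_lt_one (norm_nonneg x) hx)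

theorem Li_zero {x : ℝ} (hx : |x| < 1) : Li 0 x = x / (1 - x) := by
  refine (hasSum_Li 0 hx).unique ?_
  simpa [pow_succ, mul_comm, div_eq_mul_inv] using (hasSum_geometric_of_abs_lt_one hx).mul_left x

theorem continuousOn_Li {p : ℕ} (hp : 2 ≤ p) : ContinuousOn (Li p) (Set.Icc (-1) 1) := by
  simp only [funext (Li_eq_tsum (by omega : p ≠ 1))]
  refine continuousOn_tsum (u := fun n : ℕ => 1 / ((n : ℝ) + 1) ^ p) (fun n => by fun_prop)
    ?_ fun n x hx => ?_
  · simpa using (summable_nat_add_iff 1).mpr (Real.summable_one_div_nat_pow.mpr hp)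
  · rw [norm_div, norm_pow, norm_pow, Real.norm_of_nonneg (by positivity : (0 : ℝ) ≤ n + 1)]
    gcongr
    exact pow_le_one₀ (norm_nonneg x) (abs_le.mpr hx)

theorem hasDerivAt_Li_succ (p : ℕ) {x : ℝ} (hx0 : x ≠ 0) (hx : |x| < 1) :
    HasDerivAt (Li (p + 1)) (Li p x / x) x := by
  obtain ⟨r, hxr, hr⟩ := exists_between hx
  have hr0 : 0 < r := (abs_nonneg x).trans_lt hxr
  have hseries : HasDerivAt (fun y => ∑' n : ℕ, y ^ (n + 1) / ((n : ℝ) + 1) ^ (p + 1))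
      (∑' n : ℕ, x ^ n / ((n : ℝ) + 1) ^ p) x := by
    refine hasDerivAt_tsum_of_isPreconnected
      (g' := fun (n : ℕ) (y : ℝ) => y ^ n / ((n : ℝ) + 1) ^ p)
      (summable_geometric_of_lt_one hr0.le hr) Metric.isOpen_ball
      (convex_ball 0 r).isPreconnected (fun n y _ => ?_) (fun n y hy => ?_)
      (Metric.mem_ball_self hr0) (hasSum_Li (p + 1) (x := 0) (by simp)).summable
      (by simpa using hxr)
    · refine ((hasDerivAt_pow (n + 1) y).div_const _).congr_deriv ?_
      push_cast
      field_simp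
      ring
    · rw [norm_div, norm_pow, norm_pow]
      refine (div_le_self (by positivity) (one_le_pow₀ ?_)).trans ?_
      · rw [Real.norm_of_nonneg (by positivity)]; simp
      · exact pow_le_pow_left₀ (norm_nonneg y) (by simpa using (mem_ball_zero_iff.mp hy).le) n
  have hLi : Li (p + 1) =ᶠ[𝓝 x] fun y => ∑' n : ℕ, y ^ (n + 1) / ((n : ℝ) + 1) ^ (p + 1) := by
    filter_upwards [(isOpen_lt continuous_abs continuous_const).mem_nhds hx] with y hy
    exact (hasSum_Li (p + 1) hy).tsum_eq.symm
  have hval : ∑' n : ℕ, x ^ n / ((n : ℝ) + 1) ^ p = Li p x / x := by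
    refine ((hasSum_Li p hx).div_const x).congr_fun (fun n => ?_) |>.tsum_eq
    field_simp
    ring
  exact hval ▸ hseries.congr_of_eventuallyEq hLi

theorem abs_one_div_one_add_lt_one {z : ℝ} (hz : 0 < z) : |1 / (1 + z)| < 1 := by
  rw [abs_of_pos (by positivity), div_lt_one (by positivity)]
  linarith

theorem one_sub_one_div_one_add {z : ℝ} (hz : 1 + z ≠ 0) : 1 - 1 / (1 + z) = z / (1 + z) := by
  field_simp
  ring

theorem hasDerivAt_Li_succ_one_div_one_add (p : ℕ) {z : ℝ} (hz : 0 < z) :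
    HasDerivAt (fun y => Li (p + 1) (1 / (1 + y))) (-(1 / (1 + z) * Li p (1 / (1 + z)))) z := by
  have hinv : HasDerivAt (fun y => 1 / (1 + y)) (-1 / (1 + z) ^ 2) z := by
    simpa [one_div, Pi.inv_def] using ((hasDerivAt_id' z).const_add 1).inv (by positivity)
  refine ((hasDerivAt_Li_succ p (by positivity) (abs_one_div_one_add_lt_one hz)).comp z
    hinv).congr_deriv ?_
  field_simp

theorem hasDerivAt_log_one_add {z : ℝ} (hz : -1 < z) :
    HasDerivAt (fun y => log (1 + y)) (1 / (1 + z)) z := by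
  simpa [one_div] using ((hasDerivAt_id' z).const_add 1).log (by linarith)

/-- The right-hand side of `stmt7`, with its `Li (m + 1)` term written as the summand `k = m`. -/
noncomputable def logPowDivAntideriv (m : ℕ) (z : ℝ) : ℝ :=
  log (1 + z) ^ (m + 1) / (m + 1) + m ! * (zt (m + 1) -
    ∑ k ∈ range (m + 1), log (1 + z) ^ (m - k) / (m - k)! * Li (k + 1) (1 / (1 + z)))

theorem hasDerivAt_logPowDivAntideriv (m : ℕ) {z : ℝ} (hz : 0 < z) :
    HasDerivAt (logPowDivAntideriv m) (log (1 + z) ^ m / z) z := by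
  have hL := hasDerivAt_log_one_add (by linarith : -1 < z)
  have hsum := hasDerivAt_sum_pow_div_factorial_mul hL (f := fun j y => Li j (1 / (1 + y)))
    (fun j => hasDerivAt_Li_succ_one_div_one_add j hz) m
  refine (((hL.pow (m + 1)).div_const _).add ((hsum.const_sub _).const_mul _)).congr_deriv ?_
  have h1z : 1 + z ≠ 0 := by positivity
  rw [Li_zero (abs_one_div_one_add_lt_one hz), Nat.add_sub_cancel, one_sub_one_div_one_add h1z]
  have hz0 : z ≠ 0 := hz.ne'
  push_cast
  field_simp
  ring

theorem logPowDivAntideriv_zero {m : ℕ} (hm : m ≠ 0) : logPowDivAntideriv m 0 = 0 := by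
  rw [logPowDivAntideriv, sum_eq_single_of_mem m (self_mem_range_succ m) fun k hk hkm => ?_]
  · simp [Li_one_right (by omega : m + 1 ≠ 1)]
  · have : m - k ≠ 0 := by rw [mem_range] at hk; omega
    simp [this]

theorem tendsto_log_one_add_mul_log :
    Tendsto (fun a => log (1 + a) * log a) (𝓝[>] 0) (𝓝 0) := by
  have hmul_log : Tendsto (fun a => a * log a) (𝓝[>] 0) (𝓝 0) := by
    simpa using continuous_mul_log.continuousWithinAt (s := Set.Ioi 0) (x := 0) |>.tendsto
  refine squeeze_zero_norm' ?_ (by simpa using hmul_log.norm)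
  filter_upwards [self_mem_nhdsWithin] with a (ha : 0 < a)
  rw [norm_mul, Real.norm_of_nonneg (log_nonneg (by linarith)), abs_of_pos ha, Real.norm_eq_abs]
  gcongr
  linarith [log_le_sub_one_of_pos (by linarith : 0 < 1 + a)]

theorem Li_one_one_div_one_add {a : ℝ} (ha : 0 < a) :
    Li 1 (1 / (1 + a)) = log (1 + a) - log a := by
  rw [Li, if_pos rfl, one_sub_one_div_one_add (by positivity), log_div ha.ne' (by positivity)]
  ring

theorem continuousWithinAt_log_one_add_pow_mul_Li_one {m : ℕ} (hm : m ≠ 0) :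
    ContinuousWithinAt (fun a => log (1 + a) ^ m * Li 1 (1 / (1 + a))) (Set.Ici 0) 0 := by
  obtain ⟨k, rfl⟩ := Nat.exists_eq_succ_of_ne_zero hm
  have hL : Tendsto (fun a : ℝ => log (1 + a)) (𝓝[>] 0) (𝓝 0) := by
    simpa using ((continuousAt_const.add continuousAt_id).log
      (by norm_num : (1 : ℝ) + 0 ≠ 0)).tendsto.mono_left (nhdsWithin_le_nhds (s := Set.Ioi 0))
  have heq : (fun a => log (1 + a) ^ (k + 1) * (log (1 + a) - log a)) =ᶠ[𝓝[>] 0]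
      fun a => log (1 + a) ^ (k + 1) * Li 1 (1 / (1 + a)) := by
    filter_upwards [self_mem_nhdsWithin] with a (ha : 0 < a)
    rw [Li_one_one_div_one_add ha]
  rw [← continuousWithinAt_Ioi_iff_Ici, ContinuousWithinAt]
  refine Tendsto.congr' heq ?_
  convert (hL.pow (k + 2)).sub ((hL.pow k).mul tendsto_log_one_add_mul_log) using 1
  · funext a; ring
  · simp

theorem continuousWithinAt_logPowDivAntideriv_zero {m : ℕ} (hm : m ≠ 0) :
    ContinuousWithinAt (logPowDivAntideriv m) (Set.Ici 0) 0 := by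
  have hL : ContinuousWithinAt (fun a : ℝ => log (1 + a)) (Set.Ici 0) 0 :=
    ((continuousAt_const.add continuousAt_id).log (by norm_num)).continuousWithinAt
  have hLi : ∀ k ∈ range (m + 1), ContinuousWithinAt
      (fun a => log (1 + a) ^ (m - k) / (m - k)! * Li (k + 1) (1 / (1 + a))) (Set.Ici 0) 0 := by
    rintro (_ | k) -
    · simpa [div_mul_eq_mul_div] using
        (continuousWithinAt_log_one_add_pow_mul_Li_one hm).div_const (m ! : ℝ)
    · refine ((hL.pow _).div_const _).mul ((continuousOn_Li (by omega) 1 (by simp)).comp_of_eq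
        (continuousAt_const.div (continuousAt_const.add continuousAt_id)
          (by norm_num)).continuousWithinAt (fun a (ha : 0 ≤ a) => ?_) (by simp))
      exact ⟨by linarith [show 0 < 1 / (1 + a) by positivity],
        div_le_one_of_le₀ (by linarith) (by positivity)⟩
  exact ((hL.pow _).div_const _).add
    ((continuousWithinAt_const.sub (tendsto_finsetSum _ hLi)).const_mul _)

theorem sum_range_succ_eq_sum_Icc_add {M : Type*} [AddCommMonoid M] (g : ℕ → ℕ → M) (m : ℕ) :
    ∑ k ∈ range (m + 1), g (m - k) (k + 1) = ∑ j ∈ Icc 1 m, g (m - j + 1) j + g 0 (m + 1) := by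
  rw [sum_range_succ, Nat.sub_self, ← Ico_add_one_right_eq_Icc, sum_Ico_eq_sum_range,
    Nat.add_sub_cancel]
  congr 1
  refine sum_congr rfl fun k hk => ?_
  rw [mem_range] at hk
  rw [add_comm 1 k]
  congr 1
  omega

theorem stmt7_general (m : ℕ) (hm : 1 ≤ m) (z : ℝ) (hz₁ : 0 ≤ z) :
    ∫ x in (0 : ℝ)..z, (Real.log (1 + x)) ^ m / x
      = 1 / ((m : ℝ) + 1) * (Real.log (1 + z)) ^ (m + 1)
        + (m.factorial : ℝ) * (zt (m + 1) - Li (m + 1) (1 / (1 + z)))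
        - (m.factorial : ℝ) * ∑ j ∈ Finset.Icc 1 m,
            (Real.log (1 + z)) ^ (m - j + 1) / ((m - j + 1).factorial : ℝ)
              * Li j (1 / (1 + z)) := by
  have hderiv : ∀ x ∈ Set.Ioo 0 z, HasDerivAt (logPowDivAntideriv m) (log (1 + x) ^ m / x) x :=
    fun x hx => hasDerivAt_logPowDivAntideriv m hx.1
  have hcont : ContinuousOn (logPowDivAntideriv m) (Set.Icc 0 z) := by
    rintro x ⟨hx0, -⟩
    rcases hx0.eq_or_lt with rfl | hx0
    · exact (continuousWithinAt_logPowDivAntideriv_zero (by omega)).mono Set.Icc_subset_Ici_self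
    · exact (hasDerivAt_logPowDivAntideriv m hx0).continuousAt.continuousWithinAt
  have hint : IntervalIntegrable (fun x => log (1 + x) ^ m / x) MeasureTheory.volume 0 z :=
    (intervalIntegrable_iff_integrableOn_Ioc_of_le hz₁).mpr <|
      intervalIntegral.integrableOn_deriv_of_nonneg hcont hderiv fun x hx =>
        div_nonneg (pow_nonneg (log_nonneg (by linarith [hx.1])) m) hx.1.le
  rw [intervalIntegral.integral_eq_sub_of_hasDerivAt_of_le hz₁ hcont hderiv hint,
    logPowDivAntideriv_zero (by omega), logPowDivAntideriv,
    sum_range_succ_eq_sum_Icc_add (fun i j => log (1 + z) ^ i / i ! * Li j (1 / (1 + z)))]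
  simp only [pow_zero, Nat.factorial_zero, Nat.cast_one, div_one, one_mul, sub_zero]
  ring

theorem stmt7 (m : ℕ) (hm : 1 ≤ m) (z : ℝ) (hz₁ : 0 ≤ z) (hz₂ : z ≤ 1) :
    ∫ x in (0 : ℝ)..z, (Real.log (1 + x)) ^ m / x
      = 1 / ((m : ℝ) + 1) * (Real.log (1 + z)) ^ (m + 1)
        + (m.factorial : ℝ) * (zt (m + 1) - Li (m + 1) (1 / (1 + z)))
        - (m.factorial : ℝ) * ∑ j ∈ Finset.Icc 1 m,
            (Real.log (1 + z)) ^ (m - j + 1) / ((m - j + 1).factorial : ℝ)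
              * Li j (1 / (1 + z)) :=
  stmt7_general m hm z hz₁
end

section
/- For integers n ≥ 1 and k ≥ 0: ∫₀¹ t^{n−1} ln^k(1−t) dt = (−1)^k Y_k(n)/n, where Y_k(n) is the complete Bell polynomial evaluated at (H_n, 1!·H_n^{(2)}, 2!·H_n^{(3)}, …, (k−1)!·H_n^{(k)}). In particular Y₀(n)=1, Y₁(n)=H_n, Y₂(n)=H_n²+H_n^{(2)}, Y₃(n)=H_n³+3H_n H_n^{(2)}+2H_n^{(3)}. -/
open Real Filter

/-- Complete exponential Bell polynomial `Y_k(x₁, x₂, …)`. -/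
noncomputable def bellY : ℕ → (ℕ → ℝ) → ℝ
  | 0, _ => 1
  | (n + 1), x =>
      ∑ i ∈ Finset.range (n + 1), (n.choose i : ℝ) * x (i + 1) * bellY (n - i) x
  decreasing_by exact Nat.lt_succ_of_le (Nat.sub_le n i)

/-- `Y_k(n)`: complete Bell polynomial at `(H_n, 1! H_n^(2), …, (r-1)! H_n^(r), …)`. -/
noncomputable def Y (k n : ℕ) : ℝ := bellY k (fun r => ((r - 1).factorial : ℝ) * H r n)

/-!
Write `I(m, k) = ∫₀¹ tᵐ logᵏ(1 - t) dt`. Integrating `tᵐ log^{k+1}(1 - t)` by parts against the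
antiderivative `(t^{m+1} - 1)/(m + 1)`, which kills the boundary terms because
`(1 - t) log^{k+1}(1 - t) → 0` at `t = 1`, gives `(m + 1) I(m, k+1) = -(k + 1) ∑_{j ≤ m} I(j, k)`.
Hence `(m + 1) I(m, k) = (-1)ᵏ k! h_k(1, 1/2, …, 1/(m+1))` with `h_k` the complete homogeneous
symmetric polynomial.

The ordinary generating function `∑ₖ h_k(1, …, 1/n) Xᵏ = ∏_{j ≤ n} (1 - X/j)⁻¹` and the exponential
generating function `∑ₖ Y_k(n) Xᵏ / k!` both solve `F' = P F`, `F(0) = 1`, with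
`P = ∑ᵢ H_n^{(i+1)} Xⁱ`, so `Y_k(n) = k! h_k(1, …, 1/n)`.
-/

open MeasureTheory Set Topology PowerSeries

/-- `completeHarmonic k n = h_k(1, 1/2, …, 1/n)`, the sum of `1 / (j₁ ⋯ j_k)` over
`n ≥ j₁ ≥ ⋯ ≥ j_k ≥ 1`. -/
noncomputable def completeHarmonic : ℕ → ℕ → ℝ
  | 0, _ => 1
  | k + 1, n => ∑ j ∈ Finset.range n, completeHarmonic k (j + 1) / (j + 1)

noncomputable def completeHarmonicSeries (n : ℕ) : ℝ⟦X⟧ := mk fun k => completeHarmonic k n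

noncomputable def powerSumSeries (n : ℕ) : ℝ⟦X⟧ := mk fun i => H (i + 1) n

noncomputable def bellSeries (x : ℕ → ℝ) : ℝ⟦X⟧ := mk fun k => bellY k x / k.factorial

lemma H_succ (m n : ℕ) : H m (n + 1) = H m n + ((n : ℝ) + 1)⁻¹ ^ m := by
  simp [H, Finset.sum_range_succ, inv_pow]

lemma bellY_succ (k : ℕ) (x : ℕ → ℝ) :
    bellY (k + 1) x = ∑ i ∈ Finset.range (k + 1), (k.choose i : ℝ) * x (i + 1) * bellY (k - i) x := by
  rw [bellY]

theorem PowerSeries.eq_of_derivative_eq_mul {K : Type*} [Field K] [CharZero K] {P F G : K⟦X⟧}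
    (hF : d⁄dX K F = P * F) (hG : d⁄dX K G = P * G) (hG0 : constantCoeff G ≠ 0)
    (h0 : constantCoeff F = constantCoeff G) : F = G := by
  have hGG : G * G⁻¹ = 1 := PowerSeries.mul_inv_cancel G hG0
  have hquot : F * G⁻¹ = 1 := by
    refine derivative.ext ?_ ?_
    · rw [Derivation.leibniz, derivative_inv', hF, hG, derivative_one]
      linear_combination (-(P * F * G⁻¹)) * hGG
    · simp [constantCoeff_inv, h0, hG0]
  linear_combination G * hquot - F * hGG

lemma rescale_mk_one_mul (a : ℝ) : rescale a (mk 1) * (1 - C a * X) = 1 := by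
  simpa [rescale_X] using congrArg (rescale a) (mk_one_mul_one_sub_eq_one ℝ)

lemma completeHarmonicSeries_zero : completeHarmonicSeries 0 = 1 := by
  ext (_ | k) <;> simp [completeHarmonicSeries, completeHarmonic, coeff_one]

lemma powerSumSeries_zero : powerSumSeries 0 = 0 := by
  ext i
  simp [powerSumSeries, H]

lemma completeHarmonicSeries_succ_mul (n : ℕ) :
    completeHarmonicSeries (n + 1) * (1 - C ((n : ℝ) + 1)⁻¹ * X) = completeHarmonicSeries n := by
  ext (_ | k)
  · simp [completeHarmonicSeries, mul_sub, completeHarmonic]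
  · simp only [completeHarmonicSeries, mul_sub, mul_one, ← mul_assoc, map_sub, coeff_mk,
      completeHarmonic, Finset.sum_range_succ, coeff_succ_mul_X, coeff_mul_C]
    ring

lemma powerSumSeries_succ (n : ℕ) :
    powerSumSeries (n + 1)
      = powerSumSeries n + C ((n : ℝ) + 1)⁻¹ * rescale ((n : ℝ) + 1)⁻¹ (mk 1) := by
  ext i
  simp [powerSumSeries, H_succ, rescale_mk, pow_succ]
  ring

lemma derivative_completeHarmonicSeries (n : ℕ) :
    d⁄dX ℝ (completeHarmonicSeries n) = powerSumSeries n * completeHarmonicSeries n := by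
  induction n with
  | zero => simp [completeHarmonicSeries_zero, powerSumSeries_zero]
  | succ n ih =>
    set a : ℝ := ((n : ℝ) + 1)⁻¹
    have hmul := completeHarmonicSeries_succ_mul n
    have hderiv := congrArg (d⁄dX ℝ) hmul
    rw [ih, ← hmul] at hderiv
    simp only [map_sub, Derivation.map_one_eq_zero, Derivation.leibniz, derivative_X, smul_eq_mul,
      mul_one, derivative_C, mul_zero, add_zero, zero_sub, mul_neg] at hderiv
    rw [powerSumSeries_succ]
    -- multiply the differentiated identity by `(1 - a X)⁻¹ = ∑ aⁱ Xⁱ`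
    linear_combination (rescale a (mk 1)) * hderiv
      - (d⁄dX ℝ (completeHarmonicSeries (n + 1)) - powerSumSeries n * completeHarmonicSeries (n + 1))
        * rescale_mk_one_mul a

lemma derivative_bellSeries (x : ℕ → ℝ) :
    d⁄dX ℝ (bellSeries x) = (mk fun i => x (i + 1) / i.factorial) * bellSeries x := by
  ext k
  rw [coeff_derivative, coeff_mul, Finset.Nat.sum_antidiagonal_eq_sum_range_succ
    (fun i j => coeff i (mk fun i => x (i + 1) / i.factorial) * coeff j (bellSeries x))]
  simp only [bellSeries, coeff_mk, bellY_succ, Finset.sum_div, Finset.sum_mul]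
  refine Finset.sum_congr rfl fun i hi => ?_
  have hik : i ≤ k := Nat.lt_succ_iff.mp (Finset.mem_range.mp hi)
  rw [Nat.cast_choose ℝ hik, Nat.factorial_succ]
  push_cast
  field_simp

lemma bellSeries_eq_completeHarmonicSeries (n : ℕ) :
    bellSeries (fun r => ((r - 1).factorial : ℝ) * H r n) = completeHarmonicSeries n := by
  refine eq_of_derivative_eq_mul (P := powerSumSeries n) ?_ (derivative_completeHarmonicSeries n)
    ?_ ?_
  · rw [derivative_bellSeries]
    congr 2
    funext i
    simp [mul_div_cancel_left₀, Nat.factorial_ne_zero]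
  · simp [completeHarmonicSeries, completeHarmonic]
  · simp [completeHarmonicSeries, completeHarmonic, bellSeries, bellY]

lemma Y_eq_factorial_mul_completeHarmonic (k n : ℕ) :
    Y k n = k.factorial * completeHarmonic k n := by
  have hcoeff := congrArg (coeff k) (bellSeries_eq_completeHarmonicSeries n)
  simp only [bellSeries, completeHarmonicSeries, coeff_mk] at hcoeff
  rw [Y, ← hcoeff, mul_div_cancel₀ _ (by positivity)]

lemma abs_log_pow_mul_rpow_le (k : ℕ) {u : ℝ} (hu0 : 0 < u) (hu1 : u ≤ 1) :
    |log u| ^ k * u ^ (1 / 2 : ℝ) ≤ (2 * k) ^ k := by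
  rcases Nat.eq_zero_or_pos k with rfl | hk
  · simpa using Real.rpow_le_one hu0.le hu1 (by norm_num)
  have hlog := (abs_log_mul_self_rpow_lt u (1 / (2 * k)) hu0 hu1 (by positivity)).le
  rw [one_div_one_div] at hlog
  calc |log u| ^ k * u ^ (1 / 2 : ℝ) = |log u * u ^ (1 / (2 * k) : ℝ)| ^ k := by
        rw [abs_mul, mul_pow, abs_of_pos (rpow_pos_of_pos hu0 _), ← Real.rpow_natCast (u ^ _) k,
          ← Real.rpow_mul hu0.le]
        field_simp
    _ ≤ (2 * k) ^ k := pow_le_pow_left₀ (abs_nonneg _) hlog k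

lemma intervalIntegrable_log_pow (k : ℕ) :
    IntervalIntegrable (fun u => log u ^ k) volume 0 1 := by
  refine ((intervalIntegral.intervalIntegrable_rpow' (r := -(1 / 2)) (by norm_num)).const_mul
    ((2 * k) ^ k)).mono_fun' (by fun_prop) ?_
  rw [uIoc_of_le zero_le_one]
  refine (ae_restrict_iff' measurableSet_Ioc).2 (ae_of_all _ fun u ⟨hu0, hu1⟩ => ?_)
  dsimp only
  rw [norm_pow, Real.norm_eq_abs, Real.rpow_neg hu0.le, ← div_eq_mul_inv,
    le_div_iff₀ (by positivity)]
  exact abs_log_pow_mul_rpow_le k hu0 hu1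

lemma intervalIntegrable_pow_mul_log_one_sub_pow (m k : ℕ) :
    IntervalIntegrable (fun t => t ^ m * log (1 - t) ^ k) volume 0 1 := by
  have hsub := ((intervalIntegrable_log_pow k).continuousOn_mul
    (g := fun u => (1 - u) ^ m) (by fun_prop)).comp_sub_left 1
  simpa using hsub.symm

lemma tendsto_mul_log_pow_nhdsGT_zero (k : ℕ) :
    Tendsto (fun u => u * log u ^ k) (𝓝[>] 0) (𝓝 0) := by
  have hsqrt : Tendsto (fun u : ℝ => (2 * k) ^ k * u ^ (1 / 2 : ℝ)) (𝓝[>] 0) (𝓝 0) := by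
    simpa using (((continuous_rpow_const (by norm_num : (0 : ℝ) ≤ 1 / 2)).tendsto 0).const_mul
      ((2 * (k : ℝ)) ^ k)).mono_left nhdsWithin_le_nhds
  refine squeeze_zero_norm' ?_ hsqrt
  filter_upwards [Ioc_mem_nhdsGT zero_lt_one] with u ⟨hu0, hu1⟩
  have hu : u = u ^ (1 / 2 : ℝ) * u ^ (1 / 2 : ℝ) := by
    rw [← Real.rpow_add hu0]
    norm_num
  rw [norm_mul, norm_pow, Real.norm_eq_abs, Real.norm_eq_abs, abs_of_pos hu0]
  calc u * |log u| ^ k = u ^ (1 / 2 : ℝ) * (|log u| ^ k * u ^ (1 / 2 : ℝ)) := by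
        nth_rw 1 [hu]
        ring
    _ ≤ u ^ (1 / 2 : ℝ) * (2 * k) ^ k := by gcongr; exact abs_log_pow_mul_rpow_le k hu0 hu1
    _ = (2 * k) ^ k * u ^ (1 / 2 : ℝ) := mul_comm _ _

lemma continuousOn_mul_log_pow (k : ℕ) : ContinuousOn (fun u => u * log u ^ k) (Ici 0) := by
  intro u hu
  rcases (mem_Ici.mp hu).eq_or_lt with rfl | hu0
  · rw [← continuousWithinAt_Ioi_iff_Ici, ContinuousWithinAt]
    simpa using tendsto_mul_log_pow_nhdsGT_zero k
  · exact (continuousAt_id.mul ((continuousAt_log hu0.ne').pow k)).continuousWithinAt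

lemma continuousOn_one_sub_pow_mul_log_one_sub_pow (m k : ℕ) :
    ContinuousOn (fun t => (1 - t ^ (m + 1)) * log (1 - t) ^ (k + 1)) (Icc 0 1) := by
  have hfactor : (fun t : ℝ => (1 - t ^ (m + 1)) * log (1 - t) ^ (k + 1))
      = fun t => (∑ j ∈ Finset.range (m + 1), t ^ j) * ((1 - t) * log (1 - t) ^ (k + 1)) := by
    funext t
    rw [← mul_neg_geom_sum]
    ring
  rw [hfactor]
  refine (continuous_finsetSum _ fun j _ => continuous_pow j).continuousOn.mul
    ((continuousOn_mul_log_pow (k + 1)).comp (by fun_prop) fun t ht => ?_)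
  simpa using ht.2

lemma hasDerivAt_one_sub_pow_mul_log_one_sub_pow (m k : ℕ) {t : ℝ} (ht : t < 1) :
    HasDerivAt (fun t => (1 - t ^ (m + 1)) * log (1 - t) ^ (k + 1))
      (-((m + 1) * (t ^ m * log (1 - t) ^ (k + 1))
        + (k + 1) * ∑ j ∈ Finset.range (m + 1), t ^ j * log (1 - t) ^ k)) t := by
  have ht' : 1 - t ≠ 0 := sub_ne_zero.mpr ht.ne'
  have hlog := ((hasDerivAt_id t).const_sub 1).log ht'
  refine (((hasDerivAt_pow (m + 1) t).const_sub 1).mul (hlog.pow (k + 1))).congr_deriv ?_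
  simp only [id, Pi.pow_apply, Nat.add_sub_cancel]
  rw [← Finset.sum_mul, ← mul_neg_geom_sum]
  field_simp
  push_cast
  ring

lemma integral_pow_mul_log_one_sub_pow_succ (m k : ℕ) :
    (m + 1) * ∫ t in (0 : ℝ)..1, t ^ m * log (1 - t) ^ (k + 1)
      = -((k + 1) * ∑ j ∈ Finset.range (m + 1), ∫ t in (0 : ℝ)..1, t ^ j * log (1 - t) ^ k) := by
  have hint (j l : ℕ) := intervalIntegrable_pow_mul_log_one_sub_pow j l
  have hsum : IntervalIntegrable (fun t => ∑ j ∈ Finset.range (m + 1), t ^ j * log (1 - t) ^ k)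
      volume 0 1 := by
    simpa only [Finset.sum_fn] using IntervalIntegrable.sum _ fun j _ => hint j k
  have hftc := intervalIntegral.integral_eq_sub_of_hasDerivAt_of_le zero_le_one
    (continuousOn_one_sub_pow_mul_log_one_sub_pow m k)
    (fun t ht => hasDerivAt_one_sub_pow_mul_log_one_sub_pow m k ht.2)
    ((((hint m (k + 1)).const_mul _).add (hsum.const_mul _)).neg)
  rw [intervalIntegral.integral_neg,
    intervalIntegral.integral_add ((hint m (k + 1)).const_mul _) (hsum.const_mul _),
    intervalIntegral.integral_const_mul, intervalIntegral.integral_const_mul,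
    intervalIntegral.integral_finsetSum fun j _ => hint j k] at hftc
  simp only [neg_add_rev, one_pow, sub_self, log_zero, ne_eq, Nat.add_eq_zero_iff, one_ne_zero,
    and_false, not_false_eq_true, zero_pow, mul_zero, sub_zero, log_one] at hftc
  linear_combination -hftc

lemma integral_pow_mul_log_one_sub_pow (m k : ℕ) :
    ∫ t in (0 : ℝ)..1, t ^ m * log (1 - t) ^ k
      = (-1) ^ k * k.factorial * completeHarmonic k (m + 1) / (m + 1) := by
  induction k generalizing m with
  | zero => simp [completeHarmonic, integral_pow]
  | succ k ih =>
    have hrec := integral_pow_mul_log_one_sub_pow_succ m k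
    simp only [ih] at hrec
    rw [eq_div_iff (by positivity), mul_comm, hrec, completeHarmonic, Nat.factorial_succ,
      Finset.mul_sum, Finset.mul_sum, ← Finset.sum_neg_distrib]
    refine Finset.sum_congr rfl fun j _ => ?_
    push_cast
    ring

theorem stmt10 (n k : ℕ) (hn : 1 ≤ n) :
    ∫ t in (0 : ℝ)..1, t ^ (n - 1) * (Real.log (1 - t)) ^ k
      = (-1 : ℝ) ^ k * Y k n / n := by
  obtain ⟨m, rfl⟩ : ∃ m, n = m + 1 := ⟨n - 1, by omega⟩
  rw [Nat.add_sub_cancel, integral_pow_mul_log_one_sub_pow, Y_eq_factorial_mul_completeHarmonic]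
  push_cast
  ring
end
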